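/- arXiv:2011.13329 — 3 statements merged into one kernel-verified Lean document; each statement's English description precedes it below -/
import Mathlib

section
/- Under the relations ∑_{k≠j} ξₖ/(aⱼ - aₖ) = 2πi \overline{aⱼ}(a - ib) for j=1,2,3 with a > 0, b ∈ ℝ, distinct a₁, a₂, a₃ ∈ ℂ, the curves wⱼ(t) = aⱼ Z(t) with Z(t) = sqrt(2at) e^{i(b/(2a)) log t} satisfy, for all t > 0, the system d\overline{wⱼ}/dt = (1/(2πi)) ∑_{k≠j} ξₖ/(wⱼ(t) - wₖ(t)), and moreover wⱼ(t) → 0 as t → 0⁺. -/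
open Finset

theorem selfsimilar_burst_solves (a b : ℝ) (ha : 0 < a)
    (ξ : Fin 3 → ℝ) (A : Fin 3 → ℂ)
    (hdist : ∀ j k : Fin 3, j ≠ k → A j ≠ A k)
    (hrel : ∀ j : Fin 3, ∑ k ∈ Finset.univ.erase j, (ξ k : ℂ) / (A j - A k)
      = 2 * Real.pi * Complex.I * (starRingEnd ℂ) (A j) * ((a : ℂ) - Complex.I * b))
    (Z : ℝ → ℂ)
    (hZ : ∀ t : ℝ, Z t = (Real.sqrt (2 * a * t) : ℂ) *
      Complex.exp (Complex.I * ((b / (2 * a)) * Real.log t)))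
    (w : Fin 3 → ℝ → ℂ) (hw : ∀ j t, w j t = A j * Z t) :
    (∀ t : ℝ, 0 < t → ∀ j : Fin 3,
      HasDerivAt (fun s => (starRingEnd ℂ) (w j s))
        ((1 / (2 * Real.pi * Complex.I)) *
          ∑ k ∈ Finset.univ.erase j, (ξ k : ℂ) / (w j t - w k t)) t) ∧
    (∀ j : Fin 3, Filter.Tendsto (w j) (nhdsWithin 0 (Set.Ioi 0)) (nhds 0)) := by
  have hπ : (2 * Real.pi * Complex.I : ℂ) ≠ 0 := by
    simp [Real.pi_ne_zero, Complex.I_ne_zero]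
  have hargeq : ∀ u : ℝ, Complex.I * (((b : ℂ) / (2 * (a : ℂ))) * (Real.log u : ℂ))
      = Complex.I * (((b / (2 * a)) * Real.log u : ℝ) : ℂ) := by
    intro u; push_cast; ring
  constructor
  · intro t ht j
    have h2at : (0:ℝ) < 2 * a * t := by positivity
    set s : ℝ := Real.sqrt (2 * a * t) with hsdef
    have hspos : 0 < s := Real.sqrt_pos.mpr h2at
    have hs2 : s ^ 2 = 2 * a * t := Real.sq_sqrt h2at.le
    have hs2c : (s:ℂ) ^ 2 = 2 * a * t := by exact_mod_cast congrArg (Complex.ofReal) hs2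
    have hsne : (s:ℂ) ≠ 0 := by exact_mod_cast hspos.ne'
    have hZt : Z t = (s:ℂ) * Complex.exp (Complex.I * (((b / (2 * a)) * Real.log t : ℝ) : ℂ)) := by
      rw [hZ t, hargeq t]
    have hZne : Z t ≠ 0 := by
      rw [hZt]
      exact mul_ne_zero hsne (Complex.exp_ne_zero _)
    have hsum : ∑ k ∈ Finset.univ.erase j, (ξ k : ℂ) / (w j t - w k t)
        = (2 * Real.pi * Complex.I * (starRingEnd ℂ) (A j) * ((a:ℂ) - Complex.I * b)) / Z t := by
      rw [← hrel j, Finset.sum_div]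
      refine Finset.sum_congr rfl fun k hk => ?_
      rw [hw, hw, div_div]
      congr 1
      ring
    rw [hsum]
    have h1 : HasDerivAt (fun u : ℝ => Real.sqrt (2 * a * u)) (a / s) t := by
      have hin : HasDerivAt (fun u : ℝ => 2 * a * u) (2 * a) t := by
        simpa using (hasDerivAt_id t).const_mul (2 * a)
      have h := (Real.hasDerivAt_sqrt h2at.ne').comp t hin
      convert h using 1
      show a / s = 1 / (2 * s) * (2 * a)
      rw [div_mul_eq_mul_div, one_mul, mul_div_mul_left a s (by norm_num : (2:ℝ) ≠ 0)]
      all_goals rfl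
    have h1c : HasDerivAt (fun u : ℝ => ((Real.sqrt (2 * a * u) : ℝ) : ℂ)) ((a / s : ℝ) : ℂ) t :=
      h1.ofReal_comp
    have hlog : HasDerivAt (fun u : ℝ => (b / (2 * a)) * Real.log u) ((b / (2 * a)) * t⁻¹) t :=
      (Real.hasDerivAt_log ht.ne').const_mul (b / (2 * a))
    have hlogc : HasDerivAt (fun u : ℝ => (((b / (2 * a)) * Real.log u : ℝ) : ℂ))
        (((b / (2 * a)) * t⁻¹ : ℝ) : ℂ) t := hlog.ofReal_comp
    have harg : HasDerivAt (fun u : ℝ => -(Complex.I * (((b / (2 * a)) * Real.log u : ℝ) : ℂ)))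
        (-(Complex.I * (((b / (2 * a)) * t⁻¹ : ℝ) : ℂ))) t :=
      (hlogc.const_mul Complex.I).neg
    have hexp : HasDerivAt
        (fun u : ℝ => Complex.exp (-(Complex.I * (((b / (2 * a)) * Real.log u : ℝ) : ℂ))))
        (Complex.exp (-(Complex.I * (((b / (2 * a)) * Real.log t : ℝ) : ℂ))) *
          (-(Complex.I * (((b / (2 * a)) * t⁻¹ : ℝ) : ℂ)))) t := harg.cexp
    have hprod := (h1c.mul hexp).const_mul ((starRingEnd ℂ) (A j))
    have hfun : (fun u : ℝ => (starRingEnd ℂ) (w j u)) =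
        fun u : ℝ => (starRingEnd ℂ) (A j) *
          (((Real.sqrt (2 * a * u) : ℝ) : ℂ) *
            Complex.exp (-(Complex.I * (((b / (2 * a)) * Real.log u : ℝ) : ℂ)))) := by
      funext u
      rw [hw, hZ, hargeq u, map_mul, map_mul, Complex.conj_ofReal, ← Complex.exp_conj,
        map_mul, Complex.conj_I, Complex.conj_ofReal, neg_mul]
    rw [hfun]
    refine hprod.congr_deriv (Eq.symm ?_)
    rw [← hsdef, hZt, Complex.exp_neg]
    set E : ℂ := Complex.exp (Complex.I * (((b / (2 * a)) * Real.log t : ℝ) : ℂ)) with hE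
    have hEne : E ≠ 0 := Complex.exp_ne_zero _
    have hane : (a:ℂ) ≠ 0 := by exact_mod_cast ha.ne'
    have htne : (t:ℂ) ≠ 0 := by exact_mod_cast ht.ne'
    have hpi : (Real.pi:ℂ) ≠ 0 := by exact_mod_cast Real.pi_ne_zero
    have ha' : (a:ℂ) = (s:ℂ) ^ 2 / (2 * t) := by
      rw [hs2c]; field_simp
    push_cast
    rw [ha']
    field_simp
    ring
  · intro j
    have hb : ∀ t : ℝ, ‖w j t‖ ≤ ‖A j‖ * Real.sqrt (2 * a * t) := by
      intro t
      have h1 : Complex.I * (((b : ℂ) / (2 * (a : ℂ))) * (Real.log t : ℂ))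
          = (((b / (2 * a)) * Real.log t : ℝ) : ℂ) * Complex.I := by push_cast; ring
      have h2 : ‖Complex.exp ((((b / (2 * a)) * Real.log t : ℝ) : ℂ) * Complex.I)‖ = 1 := by
        rw [Complex.norm_exp_ofReal_mul_I]
      rw [hw, hZ, norm_mul, norm_mul, h1, h2, mul_one, Complex.norm_real,
        Real.norm_eq_abs, abs_of_nonneg (Real.sqrt_nonneg _)]
    have hc : Continuous fun t : ℝ => ‖A j‖ * Real.sqrt (2 * a * t) :=
      continuous_const.mul (Real.continuous_sqrt.comp (continuous_const.mul continuous_id))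
    have h0 := hc.tendsto 0
    simp only [mul_zero, Real.sqrt_zero] at h0
    exact squeeze_zero_norm hb (h0.mono_left nhdsWithin_le_nhds)
end

section
/- For any C¹ solution (z₁, ..., z_N) : I → ℂ^N of the free point vortices system with non-intersecting trajectories, the Hamiltonian H(t) = -(1/(2π)) ∑_{j≠k} ξⱼξₖ log|zⱼ(t) - zₖ(t)| is constant in t. -/
open Finset Complex

lemma hasDerivAt_log_complex_abs {w : ℝ → ℂ} {w' : ℂ} {t : ℝ}
    (hw : HasDerivAt w w' t) (h0 : w t ≠ 0) :
    HasDerivAt (fun s => Real.log ‖w s‖) ((w' / w t).re) t := by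
  have hre : HasDerivAt (fun s => (w s).re) w'.re t :=
    (Complex.reCLM.hasFDerivAt.comp_hasDerivAt t hw)
  have him : HasDerivAt (fun s => (w s).im) w'.im t :=
    (Complex.imCLM.hasFDerivAt.comp_hasDerivAt t hw)
  have hn : HasDerivAt (fun s => Complex.normSq (w s))
      (w'.re * (w t).re + (w t).re * w'.re + (w'.im * (w t).im + (w t).im * w'.im)) t := by
    simpa [Complex.normSq_apply] using (hre.fun_mul hre).fun_add (him.fun_mul him)
  have hne : Complex.normSq (w t) ≠ 0 := by
    simpa using (Complex.normSq_pos.2 h0).ne'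
  have hlog := (Real.hasDerivAt_log hne).comp t hn
  have hfin := hlog.div_const 2
  have heq : (fun s => Real.log ‖w s‖)
      = fun s => Real.log (Complex.normSq (w s)) / 2 := by
    funext s
    rw [Complex.norm_def, Real.log_sqrt (Complex.normSq_nonneg _)]
  rw [heq]
  refine hfin.congr_deriv ?_
  rw [Complex.div_re]
  field_simp
  ring

theorem hamiltonian_constant (N : ℕ) (ξ : Fin N → ℝ) (hξ : ∀ j, ξ j ≠ 0)
    (S : Set ℝ) (hS : Convex ℝ S)
    (z : Fin N → ℝ → ℂ)
    (hsep : ∀ t ∈ S, ∀ j k : Fin N, j ≠ k → z j t ≠ z k t)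
    (hode : ∀ j : Fin N, ∀ t ∈ S,
      HasDerivAt (fun s => (starRingEnd ℂ) (z j s))
        ((1 / (2 * Real.pi * Complex.I)) *
          ∑ k ∈ Finset.univ.erase j, (ξ k : ℂ) / (z j t - z k t)) t) :
    ∀ s ∈ S, ∀ t ∈ S,
      -(1 / (2 * Real.pi)) * ∑ j : Fin N, ∑ k ∈ Finset.univ.erase j, ξ j * ξ k * Real.log ‖z j s - z k s‖
        = -(1 / (2 * Real.pi)) * ∑ j : Fin N, ∑ k ∈ Finset.univ.erase j, ξ j * ξ k * Real.log ‖z j t - z k t‖ := by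
  set G : ℝ → ℝ := fun u => ∑ j : Fin N, ∑ k ∈ Finset.univ.erase j,
    ξ j * ξ k * Real.log ‖z j u - z k u‖ with hGdef
  -- the derivative of G is 0 on S
  have key : ∀ u ∈ S, HasDerivAt G 0 u := by
    intro u hu
    set c : Fin N → ℂ := fun j => (1 / (2 * Real.pi * Complex.I)) *
      ∑ k ∈ Finset.univ.erase j, (ξ k : ℂ) / (z j u - z k u) with hcdef
    have hz : ∀ j, HasDerivAt (z j) ((starRingEnd ℂ) (c j)) u := by
      intro j
      have h1 := hode j u hu
      have h2 := Complex.conjCLE.toContinuousLinearMap.hasFDerivAt.comp_hasDerivAt u h1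
      convert h2 using 2 with s
      · rfl
      funext s; simp [Function.comp]
      rfl
    have hterm : ∀ j : Fin N, ∀ k ∈ Finset.univ.erase j,
        HasDerivAt (fun s => ξ j * ξ k * Real.log ‖z j s - z k s‖)
          (ξ j * ξ k * ((((starRingEnd ℂ) (c j) - (starRingEnd ℂ) (c k)) / (z j u - z k u)).re)) u := by
      intro j k hk
      have hjk : k ≠ j := Finset.ne_of_mem_erase hk
      have hne : z j u - z k u ≠ 0 := sub_ne_zero.2 (hsep u hu j k hjk.symm)
      exact ((hasDerivAt_log_complex_abs ((hz j).sub (hz k)) hne).const_mul _)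
    have hG : HasDerivAt G (∑ j : Fin N, ∑ k ∈ Finset.univ.erase j,
        ξ j * ξ k * ((((starRingEnd ℂ) (c j) - (starRingEnd ℂ) (c k)) / (z j u - z k u)).re)) u := by
      apply HasDerivAt.fun_sum
      intro j _
      exact HasDerivAt.fun_sum (hterm j)
    have hD0 : (∑ j : Fin N, ∑ k ∈ Finset.univ.erase j,
        ξ j * ξ k * ((((starRingEnd ℂ) (c j) - (starRingEnd ℂ) (c k)) / (z j u - z k u)).re)) = 0 := by
      have hzero : ∀ j : Fin N,
          ((starRingEnd ℂ) (c j) * ∑ k ∈ Finset.univ.erase j, (ξ k : ℂ) / (z j u - z k u)).re = 0 := by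
        intro j
        have hπ : (2 * (Real.pi : ℂ) * Complex.I) ≠ 0 := by
          simp [Real.pi_ne_zero, Complex.I_ne_zero, Complex.ofReal_ne_zero]
        have hsum : (∑ k ∈ Finset.univ.erase j, (ξ k : ℂ) / (z j u - z k u))
            = (2 * (Real.pi : ℂ) * Complex.I) * c j := by
          rw [hcdef]; field_simp
        rw [hsum, show (starRingEnd ℂ) (c j) * (2 * (Real.pi : ℂ) * Complex.I * c j)
            = 2 * (Real.pi : ℂ) * Complex.I * (c j * (starRingEnd ℂ) (c j)) by ring,
          Complex.mul_conj]
        simp [Complex.mul_re, Complex.mul_im]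
      have hinner : ∀ j : Fin N, ∑ k ∈ Finset.univ.erase j,
          ξ j * ξ k * ((starRingEnd ℂ) (c j) / (z j u - z k u)).re = 0 := by
        intro j
        have : ∑ k ∈ Finset.univ.erase j, ξ j * ξ k * ((starRingEnd ℂ) (c j) / (z j u - z k u)).re
            = ξ j * ((starRingEnd ℂ) (c j) * ∑ k ∈ Finset.univ.erase j, (ξ k : ℂ) / (z j u - z k u)).re := by
          rw [Finset.mul_sum, Complex.re_sum, Finset.mul_sum]
          refine Finset.sum_congr rfl fun k _ => ?_
          rw [show (starRingEnd ℂ) (c j) * ((ξ k : ℂ) / (z j u - z k u))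
              = (ξ k : ℂ) * ((starRingEnd ℂ) (c j) / (z j u - z k u)) by ring,
            Complex.re_ofReal_mul]
          ring
        rw [this, hzero j, mul_zero]
      have split : ∀ j : Fin N, ∀ k : Fin N,
          ξ j * ξ k * ((((starRingEnd ℂ) (c j) - (starRingEnd ℂ) (c k)) / (z j u - z k u)).re)
          = ξ j * ξ k * ((starRingEnd ℂ) (c j) / (z j u - z k u)).re
            - ξ j * ξ k * ((starRingEnd ℂ) (c k) / (z j u - z k u)).re := by
        intro j k
        rw [sub_div, Complex.sub_re]; ring
      have hB : ∑ j : Fin N, ∑ k ∈ Finset.univ.erase j,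
          ξ j * ξ k * ((starRingEnd ℂ) (c k) / (z j u - z k u)).re = 0 := by
        rw [Finset.sum_comm' (t' := (Finset.univ : Finset (Fin N)))
          (s' := fun k => Finset.univ.erase k)
          (fun j k => by simp [Finset.mem_erase, ne_comm, and_comm])]
        refine Finset.sum_eq_zero fun k _ => ?_
        have : ∑ j ∈ Finset.univ.erase k, ξ j * ξ k * ((starRingEnd ℂ) (c k) / (z j u - z k u)).re
            = -∑ j ∈ Finset.univ.erase k, ξ k * ξ j * ((starRingEnd ℂ) (c k) / (z k u - z j u)).re := by
          rw [← Finset.sum_neg_distrib]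
          refine Finset.sum_congr rfl fun j _ => ?_
          rw [show z j u - z k u = -(z k u - z j u) by ring, div_neg, Complex.neg_re]
          ring
        rw [this, hinner k, neg_zero]
      calc ∑ j : Fin N, ∑ k ∈ Finset.univ.erase j,
            ξ j * ξ k * ((((starRingEnd ℂ) (c j) - (starRingEnd ℂ) (c k)) / (z j u - z k u)).re)
          = (∑ j : Fin N, ∑ k ∈ Finset.univ.erase j,
              ξ j * ξ k * ((starRingEnd ℂ) (c j) / (z j u - z k u)).re)
            - ∑ j : Fin N, ∑ k ∈ Finset.univ.erase j,
              ξ j * ξ k * ((starRingEnd ℂ) (c k) / (z j u - z k u)).re := by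
            rw [← Finset.sum_sub_distrib]
            refine Finset.sum_congr rfl fun j _ => ?_
            rw [← Finset.sum_sub_distrib]
            exact Finset.sum_congr rfl fun k _ => split j k
        _ = 0 := by rw [hB, sub_zero]; exact Finset.sum_eq_zero fun j _ => hinner j
    rwa [hD0] at hG
  -- conclude constancy via convexity
  intro s hs t ht
  have hconst : G s = G t := by
    have := hS.norm_image_sub_le_of_norm_hasFDerivWithin_le
      (f' := fun _ => ContinuousLinearMap.smulRight (1 : ℝ →L[ℝ] ℝ) (0:ℝ)) (C := 0)
      (fun x hx => ((key x hx).hasDerivWithinAt (s := S)).hasFDerivWithinAt)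
      (fun x _ => by simp) hs ht
    have : |G t - G s| ≤ 0 := by simpa using this
    have := abs_nonpos_iff.mp (le_trans this le_rfl)
    linarith [sub_eq_zero.mp this]
  exact congrArg (fun x => -(1 / (2 * Real.pi)) * x) hconst
end

section
/- Let p(λ) = y² - c₁ y + c₂ where y = (a+λ)² + b², a > 0, b, c₁, c₂ ∈ ℝ. If both numbers 2b² - c₁ + sqrt((2b² - c₁)² - 4(b⁴ - b²c₁ + c₂)) and 2b² - c₁ - sqrt((2b² - c₁)² - 4(b⁴ - b²c₁ + c₂)) are strictly positive real (in particular the discriminant (2b² - c₁)² - 4(b⁴ - b²c₁ + c₂) is positive), then p has four distinct complex roots, each of the form λ = -a + iμ with μ ∈ ℝ; in particular every root of p has real part equal to -a. -/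
theorem eigenvalue_real_parts (a b c₁ c₂ : ℝ) (ha : 0 < a)
    (p : ℂ → ℂ)
    (hp : ∀ l : ℂ, p l = (((a : ℂ) + l) ^ 2 + (b : ℂ) ^ 2) ^ 2
      - (c₁ : ℂ) * (((a : ℂ) + l) ^ 2 + (b : ℂ) ^ 2) + (c₂ : ℂ))
    (hdisc : 0 < (2 * b ^ 2 - c₁) ^ 2 - 4 * (b ^ 4 - b ^ 2 * c₁ + c₂))
    (hpos₁ : 0 < 2 * b ^ 2 - c₁
      + Real.sqrt ((2 * b ^ 2 - c₁) ^ 2 - 4 * (b ^ 4 - b ^ 2 * c₁ + c₂)))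
    (hpos₂ : 0 < 2 * b ^ 2 - c₁
      - Real.sqrt ((2 * b ^ 2 - c₁) ^ 2 - 4 * (b ^ 4 - b ^ 2 * c₁ + c₂))) :
    (∃ l₁ l₂ l₃ l₄ : ℂ, l₁ ≠ l₂ ∧ l₁ ≠ l₃ ∧ l₁ ≠ l₄ ∧ l₂ ≠ l₃ ∧ l₂ ≠ l₄ ∧ l₃ ≠ l₄ ∧
      p l₁ = 0 ∧ p l₂ = 0 ∧ p l₃ = 0 ∧ p l₄ = 0) ∧
    (∀ l : ℂ, p l = 0 → l.re = -a ∧ ∃ μ : ℝ, l = -(a : ℂ) + (μ : ℂ) * Complex.I) := by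
  set D : ℝ := (2 * b ^ 2 - c₁) ^ 2 - 4 * (b ^ 4 - b ^ 2 * c₁ + c₂) with hD
  set s : ℝ := Real.sqrt D with hs
  have hs2 : s ^ 2 = D := Real.sq_sqrt hdisc.le
  have hspos : 0 < s := Real.sqrt_pos.mpr hdisc
  set μ₁ : ℝ := Real.sqrt ((2 * b ^ 2 - c₁ + s) / 2) with hμ₁
  set μ₂ : ℝ := Real.sqrt ((2 * b ^ 2 - c₁ - s) / 2) with hμ₂
  have hμ₁sq : μ₁ ^ 2 = (2 * b ^ 2 - c₁ + s) / 2 := Real.sq_sqrt (by linarith)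
  have hμ₂sq : μ₂ ^ 2 = (2 * b ^ 2 - c₁ - s) / 2 := Real.sq_sqrt (by linarith)
  have hμ₁pos : 0 < μ₁ := Real.sqrt_pos.mpr (by linarith)
  have hμ₂pos : 0 < μ₂ := Real.sqrt_pos.mpr (by linarith)
  have hμlt : μ₂ < μ₁ := by
    nlinarith [hμ₁pos, hμ₂pos, hμ₁sq, hμ₂sq]
  have hsum : μ₁ ^ 2 + μ₂ ^ 2 = 2 * b ^ 2 - c₁ := by rw [hμ₁sq, hμ₂sq]; ring
  have hprod : μ₁ ^ 2 * μ₂ ^ 2 = b ^ 4 - b ^ 2 * c₁ + c₂ := by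
    rw [hμ₁sq, hμ₂sq]
    have : s ^ 2 = (2 * b ^ 2 - c₁) ^ 2 - 4 * (b ^ 4 - b ^ 2 * c₁ + c₂) := hs2
    nlinarith [this]
  have h1 : (μ₁ : ℂ) ^ 2 + (μ₂ : ℂ) ^ 2 = 2 * (b : ℂ) ^ 2 - (c₁ : ℂ) := by
    exact_mod_cast congrArg (Complex.ofReal) hsum
  have h2 : (μ₁ : ℂ) ^ 2 * (μ₂ : ℂ) ^ 2 = (b : ℂ) ^ 4 - (b : ℂ) ^ 2 * (c₁ : ℂ) + (c₂ : ℂ) := by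
    exact_mod_cast congrArg (Complex.ofReal) hprod
  have hI : (Complex.I) ^ 2 = -1 := Complex.I_sq
  -- full factorization
  have hfac : ∀ l : ℂ, p l =
      (l - (-(a : ℂ) + (μ₁ : ℂ) * Complex.I)) * (l - (-(a : ℂ) - (μ₁ : ℂ) * Complex.I)) *
      ((l - (-(a : ℂ) + (μ₂ : ℂ) * Complex.I)) * (l - (-(a : ℂ) - (μ₂ : ℂ) * Complex.I))) := by
    intro l
    rw [hp l]
    linear_combination (-((a : ℂ) + l) ^ 2) * h1 - h2 +
      (((μ₁ : ℂ) ^ 2 * (l + a) ^ 2 + (μ₂ : ℂ) ^ 2 * (l + a) ^ 2 +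
        (μ₁ : ℂ) ^ 2 * (μ₂ : ℂ) ^ 2 * (1 + Complex.I ^ 2)
        - 2 * (μ₁ : ℂ) ^ 2 * (μ₂ : ℂ) ^ 2 * Complex.I ^ 2)) * hI
  have him : ∀ μ : ℝ, (-(a : ℂ) + (μ : ℂ) * Complex.I).im = μ := by
    intro μ; simp
  constructor
  · refine ⟨-(a : ℂ) + (μ₁ : ℂ) * Complex.I, -(a : ℂ) - (μ₁ : ℂ) * Complex.I,
      -(a : ℂ) + (μ₂ : ℂ) * Complex.I, -(a : ℂ) - (μ₂ : ℂ) * Complex.I,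
      ?_, ?_, ?_, ?_, ?_, ?_, ?_, ?_, ?_, ?_⟩
    · intro h; have := congrArg Complex.im h; simp at this; linarith
    · intro h; have := congrArg Complex.im h; simp at this; linarith
    · intro h; have := congrArg Complex.im h; simp at this; linarith
    · intro h; have := congrArg Complex.im h; simp at this; linarith
    · intro h; have := congrArg Complex.im h; simp at this; linarith
    · intro h; have := congrArg Complex.im h; simp at this; linarith
    · rw [hfac]; ring
    · rw [hfac]; ring
    · rw [hfac]; ring
    · rw [hfac]; ring
  · intro l hl
    rw [hfac l] at hl
    have hcases := mul_eq_zero.mp hl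
    have : l = -(a : ℂ) + (μ₁ : ℂ) * Complex.I ∨ l = -(a : ℂ) - (μ₁ : ℂ) * Complex.I ∨
        l = -(a : ℂ) + (μ₂ : ℂ) * Complex.I ∨ l = -(a : ℂ) - (μ₂ : ℂ) * Complex.I := by
      rcases hcases with h | h
      · rcases mul_eq_zero.mp h with h | h
        · exact Or.inl (sub_eq_zero.mp h)
        · exact Or.inr (Or.inl (sub_eq_zero.mp h))
      · rcases mul_eq_zero.mp h with h | h
        · exact Or.inr (Or.inr (Or.inl (sub_eq_zero.mp h)))
        · exact Or.inr (Or.inr (Or.inr (sub_eq_zero.mp h)))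
    rcases this with h | h | h | h
    · subst h; constructor
      · simp
      · exact ⟨μ₁, rfl⟩
    · subst h; constructor
      · simp
      · exact ⟨-μ₁, by push_cast; ring⟩
    · subst h; constructor
      · simp
      · exact ⟨μ₂, rfl⟩
    · subst h; constructor
      · simp
      · exact ⟨-μ₂, by push_cast; ring⟩
end
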